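/- Given two star graphs, each rooted at its minimum-labeled vertex, connected by a single edge between the two roots, the label propagation algorithm converges to a single star rooted at the overall minimum label in at most three steps. -/

import Mathlib

/-!
Labels only ever copy labels of vertices, and edges never leave the vertex set
`V = {L, R} ∪ S ∪ T`; so every label stays in `V` and never drops below `L`.
Upper bounds travel along edges: after one step the leaves of `L` and the root `R` carry
label `L` (through the edge between the roots, or because `L` is a neighbour of `R`), while
each edge `(t, R)` with `t ∈ T` has been symmetrized into `(R, t)` because `t` was labelled `R`;
through it `t` receives the label `L` in the second step. Once every label is `L`, the third step
turns each edge `(v, u)` into `(u, L)`, or into `(L, v)` when `u = L`.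
-/

/-- One step of edge replacement: label propagation `(v,u) ↦ (u, L v)` when `u ≠ L v`,
symmetrization `(v,u) ↦ (u,v)` when `u = L v`. -/
def stepEdges (L : ℕ → ℕ) (E : Multiset (ℕ × ℕ)) : Multiset (ℕ × ℕ) :=
  E.map (fun e => if e.2 = L e.1 then (e.2, e.1) else (e.2, L e.1))

/-- One step of label update: `L' u = min (L u) (min of L v over edges (v,u) with u ≠ L v)`. -/
def stepLabels (L : ℕ → ℕ) (E : Multiset (ℕ × ℕ)) : ℕ → ℕ :=
  fun u =>
    ((E.filter (fun e => e.2 = u ∧ e.2 ≠ L e.1)).map (fun e => L e.1)).fold min (L u)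

/-- One full step of the label propagation algorithm. -/
def lpStep (s : Multiset (ℕ × ℕ) × (ℕ → ℕ)) : Multiset (ℕ × ℕ) × (ℕ → ℕ) :=
  (stepEdges s.2 s.1, stepLabels s.2 s.1)

/-- Initial labels: the minimum of the closed neighborhood of `v`. -/
def initLabels (E₀ : Finset (ℕ × ℕ)) (v : ℕ) : ℕ :=
  (insert v ((E₀.filter (fun e => e.1 = v)).image Prod.snd)).min' (Finset.insert_nonempty _ _)

/-- The state (edge multiset, label array) after `k` steps of the algorithm on
initial (directed) edge set `E₀`. -/
def lpRun (E₀ : Finset (ℕ × ℕ)) (k : ℕ) : Multiset (ℕ × ℕ) × (ℕ → ℕ) :=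
  lpStep^[k] (E₀.val, initLabels E₀)

/-- Undirected connectivity via the edges of a directed edge multiset. -/
def EdgeConn (E : Multiset (ℕ × ℕ)) (v u : ℕ) : Prop :=
  Relation.ReflTransGen (fun a b => (a, b) ∈ E ∨ (b, a) ∈ E) v u

/-- `E₀` is symmetric (both orientations of each undirected edge are present). -/
def IsSym (E₀ : Finset (ℕ × ℕ)) : Prop := ∀ v u : ℕ, (v, u) ∈ E₀ → (u, v) ∈ E₀

/-- `E₀` has no loop edges. -/
def Loopless (E₀ : Finset (ℕ × ℕ)) : Prop := ∀ v : ℕ, (v, v) ∉ E₀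

/-- The star rooted at `r` with leaf set `S`, with both orientations of each edge. -/
def starEdges (r : ℕ) (S : Finset ℕ) : Finset (ℕ × ℕ) :=
  (S.image fun s => (r, s)) ∪ (S.image fun s => (s, r))


namespace Multiset

variable {α : Type*} [LinearOrder α]

theorem le_fold_min {b c : α} {s : Multiset α} :
    c ≤ s.fold min b ↔ c ≤ b ∧ ∀ x ∈ s, c ≤ x := by
  induction s using Multiset.induction_on with
  | empty => simp
  | cons a s ih => simp [fold_cons_left, ih, and_left_comm]

theorem fold_min_mem {t : Set α} {b : α} {s : Multiset α} (hb : b ∈ t) (hs : ∀ x ∈ s, x ∈ t) :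
    s.fold min b ∈ t := by
  induction s using Multiset.induction_on with
  | empty => exact hb
  | cons a s ih =>
    rw [fold_cons_left]
    rcases min_choice a (s.fold min b) with h | h <;> rw [h]
    · exact hs a (mem_cons_self a s)
    · exact ih fun x hx => hs x (mem_cons_of_mem hx)

end Multiset

section Step

variable {lab : ℕ → ℕ} {E : Multiset (ℕ × ℕ)}

theorem stepLabels_le_self (u : ℕ) : stepLabels lab E u ≤ lab u :=
  (Multiset.le_fold_min.1 (le_refl (stepLabels lab E u))).1

theorem stepLabels_le_of_mem {v u : ℕ} (h : (v, u) ∈ E) (hu : u ≠ lab v) :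
    stepLabels lab E u ≤ lab v :=
  (Multiset.le_fold_min.1 (le_refl (stepLabels lab E u))).2 _ <|
    Multiset.mem_map_of_mem _ (Multiset.mem_filter.2 ⟨h, rfl, hu⟩)

theorem stepLabels_mem {V : Set ℕ} {u : ℕ} (hu : lab u ∈ V)
    (hE : ∀ p ∈ E, p.2 = u → lab p.1 ∈ V) : stepLabels lab E u ∈ V := by
  refine Multiset.fold_min_mem hu fun x hx => ?_
  obtain ⟨p, hp, rfl⟩ := Multiset.mem_map.1 hx
  exact hE p (Multiset.mem_filter.1 hp).1 (Multiset.mem_filter.1 hp).2.1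

theorem swap_mem_stepEdges {v u : ℕ} (h : (v, u) ∈ E) (hu : u = lab v) :
    (u, v) ∈ stepEdges lab E :=
  Multiset.mem_map.2 ⟨(v, u), h, if_pos hu⟩

theorem incident_of_mem_stepEdges {m : ℕ} (hE : ∀ p ∈ E, lab p.1 = m) {q : ℕ × ℕ}
    (hq : q ∈ stepEdges lab E) : q.1 = m ∨ q.2 = m := by
  obtain ⟨p, hp, rfl⟩ := Multiset.mem_map.1 hq
  split_ifs with h
  · exact Or.inl (h.trans (hE p hp))
  · exact Or.inr (hE p hp)

end Step

theorem initLabels_le_self (E₀ : Finset (ℕ × ℕ)) (v : ℕ) : initLabels E₀ v ≤ v :=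
  Finset.min'_le _ _ (Finset.mem_insert_self _ _)

theorem initLabels_le_of_mem {E₀ : Finset (ℕ × ℕ)} {v b : ℕ} (h : (v, b) ∈ E₀) :
    initLabels E₀ v ≤ b := by
  apply Finset.min'_le
  exact Finset.mem_insert_of_mem
    (Finset.mem_image.2 ⟨(v, b), Finset.mem_filter.2 ⟨h, rfl⟩, rfl⟩)

theorem initLabels_mem {E₀ : Finset (ℕ × ℕ)} {V : Set ℕ} {v : ℕ} (hv : v ∈ V)
    (hE : ∀ b, (v, b) ∈ E₀ → b ∈ V) : initLabels E₀ v ∈ V := by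
  rcases Finset.mem_insert.1 (Finset.min'_mem _ (Finset.insert_nonempty v
    ((E₀.filter fun e => e.1 = v).image Prod.snd))) with h | h
  · rwa [initLabels, h]
  · obtain ⟨p, hp, hpb⟩ := Finset.mem_image.1 h
    obtain ⟨hpE, rfl⟩ := Finset.mem_filter.1 hp
    rw [initLabels, ← hpb]
    exact hE p.2 hpE

theorem lpRun_succ (E₀ : Finset (ℕ × ℕ)) (k : ℕ) : lpRun E₀ (k + 1) = lpStep (lpRun E₀ k) :=
  Function.iterate_succ_apply' _ _ _

theorem lpRun_labels_succ_le (E₀ : Finset (ℕ × ℕ)) (k v : ℕ) :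
    (lpRun E₀ (k + 1)).2 v ≤ (lpRun E₀ k).2 v := by
  rw [lpRun_succ]
  exact stepLabels_le_self v

def IsConfinedTo (V : Set ℕ) (s : Multiset (ℕ × ℕ) × (ℕ → ℕ)) : Prop :=
  (∀ p ∈ s.1, p ∈ V ×ˢ V) ∧ Set.MapsTo s.2 V V

namespace IsConfinedTo

variable {V : Set ℕ} {s : Multiset (ℕ × ℕ) × (ℕ → ℕ)}

theorem lpStep (hs : IsConfinedTo V s) : IsConfinedTo V (lpStep s) := by
  obtain ⟨hE, hlab⟩ := hs
  refine ⟨fun q hq => ?_, fun u hu => stepLabels_mem (hlab hu) fun p hp _ => hlab (hE p hp).1⟩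
  obtain ⟨p, hp, rfl⟩ := Multiset.mem_map.1 hq
  obtain ⟨h1, h2⟩ := hE p hp
  split_ifs
  exacts [⟨h2, h1⟩, ⟨h2, hlab h1⟩]

theorem lpStep_star_of_labels_le {m : ℕ} (hs : IsConfinedTo V s) (hV : ∀ v ∈ V, m ≤ v)
    (hlab : ∀ v ∈ V, s.2 v ≤ m) :
    (∀ v ∈ V, (_root_.lpStep s).2 v = m) ∧ ∀ q ∈ (_root_.lpStep s).1, q.1 = m ∨ q.2 = m := by
  have hm : ∀ v ∈ V, s.2 v = m := fun v hv => (hlab v hv).antisymm (hV _ (hs.2 hv))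
  refine ⟨fun v hv => ?_, fun q hq =>
    incident_of_mem_stepEdges (fun p hp => hm _ (hs.1 p hp).1) hq⟩
  exact ((stepLabels_le_self v).trans (hm v hv).le).antisymm (hV _ (hs.lpStep.2 hv))

end IsConfinedTo

theorem isConfinedTo_lpRun {E₀ : Finset (ℕ × ℕ)} {V : Set ℕ} (hE₀ : ∀ p ∈ E₀, p ∈ V ×ˢ V)
    (k : ℕ) : IsConfinedTo V (lpRun E₀ k) := by
  induction k with
  | zero => exact ⟨fun p hp => hE₀ p hp, fun v hv => initLabels_mem hv fun b hb => (hE₀ _ hb).2⟩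
  | succ k ih => rw [lpRun_succ]; exact ih.lpStep

def twoStars (L : ℕ) (S : Finset ℕ) (R : ℕ) (T : Finset ℕ) (e : ℕ × ℕ) : Finset (ℕ × ℕ) :=
  starEdges L S ∪ starEdges R T ∪ {e}

section TwoStars

variable {L R : ℕ} {S T : Finset ℕ} {e : ℕ × ℕ}

theorem twoStars_subset (he : e = (L, R) ∨ e = (R, L)) :
    ∀ p ∈ twoStars L S R T e, p ∈ (↑(insert L (insert R (S ∪ T))) : Set ℕ) ×ˢ
      (↑(insert L (insert R (S ∪ T))) : Set ℕ) := by
  intro p hp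
  simp only [twoStars, starEdges, Finset.mem_union, Finset.mem_image, Finset.mem_singleton] at hp
  rcases hp with ((⟨s, hs, rfl⟩ | ⟨s, hs, rfl⟩) | ⟨t, ht, rfl⟩ | ⟨t, ht, rfl⟩) | rfl
  · simp [hs]
  · simp [hs]
  · simp [ht]
  · simp [ht]
  · rcases he with rfl | rfl <;> simp

theorem eq_right_of_mem_twoStars (hLR : L < R) (hT : ∀ t ∈ T, R < t) (hST : Disjoint S T)
    (he : e = (L, R) ∨ e = (R, L)) {t b : ℕ} (ht : t ∈ T) (h : (t, b) ∈ twoStars L S R T e) :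
    b = R := by
  have := hT t ht
  simp only [twoStars, starEdges, Finset.mem_union, Finset.mem_image, Finset.mem_singleton] at h
  rcases h with ((⟨s, -, h⟩ | ⟨s, hs, h⟩) | ⟨t', -, h⟩ | ⟨t', -, h⟩) | h
  · grind
  · obtain ⟨rfl, -⟩ := Prod.mk.inj h
    exact absurd ht (Finset.disjoint_left.1 hST hs)
  · grind
  · grind
  · rcases he with rfl | rfl <;> grind

theorem lpRun_twoStars_labels_two_le (hLR : L < R) (hS : ∀ s ∈ S, L < s) (hT : ∀ t ∈ T, R < t)
    (hST : Disjoint S T) (he : e = (L, R) ∨ e = (R, L)) :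
    ∀ v ∈ insert L (insert R (S ∪ T)), (lpRun (twoStars L S R T e) 2).2 v ≤ L := by
  set E₀ := twoStars L S R T e
  have mem_E₀ : ∀ {p}, (∃ s ∈ S, p = (s, L)) ∨ (∃ t ∈ T, p = (R, t) ∨ p = (t, R)) ∨ p = e →
      p ∈ E₀ := by
    rintro p (⟨s, hs, rfl⟩ | ⟨t, ht, rfl | rfl⟩ | rfl) <;> simp [E₀, twoStars, starEdges, *]
  have lab0_L : (lpRun E₀ 0).2 L ≤ L := initLabels_le_self _ _
  have lab0_S : ∀ s ∈ S, (lpRun E₀ 0).2 s ≤ L := fun s hs =>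
    initLabels_le_of_mem (mem_E₀ (Or.inl ⟨s, hs, rfl⟩))
  have lab0_T : ∀ t ∈ T, (lpRun E₀ 0).2 t = R := fun t ht =>
    (initLabels_le_of_mem (mem_E₀ (Or.inr (Or.inl ⟨t, ht, Or.inr rfl⟩)))).antisymm
      (initLabels_mem (V := Set.Ici R) (hT t ht).le fun b hb =>
        (eq_right_of_mem_twoStars hLR hT hST he ht hb).ge)
  have lab1_R : (lpRun E₀ 1).2 R ≤ L := by
    rcases he with rfl | rfl
    · exact (stepLabels_le_of_mem (mem_E₀ (Or.inr (Or.inr rfl)))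
        (lab0_L.trans_lt hLR).ne').trans lab0_L
    · exact (lpRun_labels_succ_le E₀ 0 R).trans
        (initLabels_le_of_mem (mem_E₀ (Or.inr (Or.inr rfl))))
  have edge1_T : ∀ t ∈ T, (R, t) ∈ (lpRun E₀ 1).1 := fun t ht =>
    swap_mem_stepEdges (mem_E₀ (Or.inr (Or.inl ⟨t, ht, Or.inr rfl⟩))) (lab0_T t ht).symm
  intro v hv
  simp only [Finset.mem_insert, Finset.mem_union] at hv
  rcases hv with rfl | rfl | hv | hv
  · exact (lpRun_labels_succ_le E₀ 1 v).trans ((lpRun_labels_succ_le E₀ 0 v).trans lab0_L)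
  · exact (lpRun_labels_succ_le E₀ 1 v).trans lab1_R
  · exact (lpRun_labels_succ_le E₀ 1 v).trans
      ((lpRun_labels_succ_le E₀ 0 v).trans (lab0_S v hv))
  · have hRv : v ≠ (lpRun E₀ 1).2 R := ((lab1_R.trans_lt hLR).trans (hT v hv)).ne'
    exact (stepLabels_le_of_mem (edge1_T v hv) hRv).trans lab1_R

end TwoStars

theorem lp_star_merge_three_steps_general
    (L R : ℕ) (S T : Finset ℕ) (hLR : L < R)
    (hS : ∀ s ∈ S, L < s) (hT : ∀ t ∈ T, R < t)
    (hST : Disjoint S T)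
    (e : ℕ × ℕ) (he : e = (L, R) ∨ e = (R, L)) :
    let E₀ : Finset (ℕ × ℕ) := starEdges L S ∪ starEdges R T ∪ {e}
    (∀ v ∈ insert L (insert R (S ∪ T)), (lpRun E₀ 3).2 v = L) ∧
      ∀ e' ∈ (lpRun E₀ 3).1, e'.1 = L ∨ e'.2 = L := by
  have hV : ∀ v ∈ (↑(insert L (insert R (S ∪ T))) : Set ℕ), L ≤ v := by
    intro v hv
    simp only [Finset.coe_insert, Finset.coe_union, Set.mem_insert_iff, Set.mem_union,
      Finset.mem_coe] at hv
    rcases hv with rfl | rfl | hv | hv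
    exacts [le_rfl, hLR.le, (hS v hv).le, (hLR.trans (hT v hv)).le]
  exact (isConfinedTo_lpRun (twoStars_subset he) 2).lpStep_star_of_labels_le hV
    (lpRun_twoStars_labels_two_le hLR hS hT hST he)

/-- Given two stars, each rooted at its minimum-labeled vertex (`L < R`
being the roots, each smaller than all of its leaves), connected by a single directed edge
between the two roots (in either orientation), the label propagation algorithm converges
in at most three steps to a single star rooted at the overall minimum `L`: after 3 steps
every vertex holds label `L` and every remaining edge is incident to `L`. -/
theorem lp_star_merge_three_steps
    (L R : ℕ) (S T : Finset ℕ) (hLR : L < R)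
    (hS : ∀ s ∈ S, L < s) (hT : ∀ t ∈ T, R < t)
    (hST : Disjoint S T) (hLS : L ∉ S) (hLT : L ∉ T) (hRS : R ∉ S) (hRT : R ∉ T)
    (e : ℕ × ℕ) (he : e = (L, R) ∨ e = (R, L)) :
    let E₀ : Finset (ℕ × ℕ) := starEdges L S ∪ starEdges R T ∪ {e}
    (∀ v ∈ insert L (insert R (S ∪ T)), (lpRun E₀ 3).2 v = L) ∧
      ∀ e' ∈ (lpRun E₀ 3).1, e'.1 = L ∨ e'.2 = L :=
  lp_star_merge_three_steps_general L R S T hLR hS hT hST e he
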